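/- arXiv:1210.1068 — 6 statements merged into one kernel-verified Lean document; each statement's English description precedes it below -/
import Mathlib

section
/- Fix i ∈ {1, …, N} and a real parameter d_i, and let A_i : ℝ² → ℝ² be the affine map A_i(x, y) = (a_i x + e_i, c_i x + d_i y + f_i) with coefficients a_i = (x_i − x_{i−1})/(b − a), c_i = (y_i − y_{i−1} − d_i(y_N − y_0))/(b − a), e_i = (b x_{i−1} − a x_i)/(b − a), f_i = (b y_{i−1} − a y_i − d_i(b y_0 − a y_N))/(b − a). Then A_i maps the closed line segment joining (x_0, y_0) and (x_N, y_N) onto the closed line segment joining (x_{i−1}, y_{i−1}) and (x_i, y_i). -/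
/-- The affine map `A_i` maps the closed segment joining `(x₀, y₀)` and `(x_N, y_N)` onto the
closed segment joining `(x_{i-1}, y_{i-1})` and `(x_i, y_i)`. -/
theorem affine_map_segment_image
    (a b : ℝ) (hab : a < b) (N : ℕ) (hN : 2 ≤ N)
    (x y : ℕ → ℝ) (hxa : x 0 = a) (hxb : x N = b)
    (hmono : ∀ j, j < N → x j < x (j + 1))
    (hmem : ∀ j, j ≤ N → x j ∈ Set.Icc a b)
    (i : ℕ) (hi1 : 1 ≤ i) (hiN : i ≤ N) (d : ℝ) :
    let ai : ℝ := (x i - x (i - 1)) / (b - a)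
    let ci : ℝ := (y i - y (i - 1) - d * (y N - y 0)) / (b - a)
    let ei : ℝ := (b * x (i - 1) - a * x i) / (b - a)
    let fi : ℝ := (b * y (i - 1) - a * y i - d * (b * y 0 - a * y N)) / (b - a)
    let A : ℝ × ℝ → ℝ × ℝ := fun p => (ai * p.1 + ei, ci * p.1 + d * p.2 + fi)
    A '' segment ℝ (x 0, y 0) (x N, y N) =
      segment ℝ (x (i - 1), y (i - 1)) (x i, y i) := by
  intro ai ci ei fi A
  have hba : b - a ≠ 0 := sub_ne_zero.2 hab.ne'
  set L : ℝ × ℝ →ₗ[ℝ] ℝ × ℝ :=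
    { toFun := fun p => (ai * p.1, ci * p.1 + d * p.2)
      map_add' := by
        intro p q
        simp [Prod.ext_iff]
        constructor <;> ring
      map_smul' := by
        intro c p
        simp [Prod.ext_iff, Prod.smul_def, smul_eq_mul]
        constructor <;> ring } with hL
  set f : ℝ × ℝ →ᵃ[ℝ] ℝ × ℝ := L.toAffineMap + AffineMap.const ℝ (ℝ × ℝ) (ei, fi) with hf
  have hA : A = ⇑f := by
    funext p
    simp [A, hf, hL, Prod.ext_iff]
  rw [hA, image_segment]
  have h1 : f (x 0, y 0) = (x (i - 1), y (i - 1)) := by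
    simp [hf, hL, Prod.ext_iff, hxa, ai, ci, ei, fi]
    constructor
    · field_simp
      ring
    · field_simp
      ring
  have h2 : f (x N, y N) = (x i, y i) := by
    simp [hf, hL, Prod.ext_iff, hxb, ai, ci, ei, fi]
    constructor
    · field_simp
      ring
    · field_simp
      ring
  rw [h1, h2]
end

section
/- Suppose g : [a, b] → ℝ is continuous with g(a) = y_0 and g(b) = y_N. Then the function Φg : [a, b] → ℝ defined by (Φg)(x) = p_i(u_i⁻¹(x)) + d_i · g(u_i⁻¹(x)) for x ∈ [x_{i−1}, x_i] (i = 1, …, N) is well defined (the two candidate values agree at each interior node x_1, …, x_{N−1}) and continuous on [a, b], and it satisfies (Φg)(x_j) = y_j for every j = 0, 1, …, N. -/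
open Set

private lemma contOn_union_closed {f : ℝ → ℝ} {s t : Set ℝ} (hs : IsClosed s)
    (ht : IsClosed t) (hfs : ContinuousOn f s) (hft : ContinuousOn f t) :
    ContinuousOn f (s ∪ t) := by
  intro z hz
  rw [continuousWithinAt_union]
  constructor
  · by_cases h : z ∈ s
    · exact hfs z h
    · exact continuousWithinAt_of_notMem_closure (by rwa [hs.closure_eq])
  · by_cases h : z ∈ t
    · exact hft z h
    · exact continuousWithinAt_of_notMem_closure (by rwa [ht.closure_eq])

/-- Piecewise gluing function. -/
private noncomputable def PhiAux (h : ℕ → ℝ → ℝ) (x : ℕ → ℝ) : ℕ → ℝ → ℝ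
  | 0 => h 1
  | k+1 => fun t => if t ≤ x k then PhiAux h x k t else h (k+1) t

/-- For continuous `g` on `[a, b]` with `g a = y₀`, `g b = y_N`, the piecewise formula
`(Φg)(x) = p_i(u_i⁻¹ x) + d_i · g(u_i⁻¹ x)` on `[x_{i-1}, x_i]` is well defined (the two
candidate values agree at interior nodes), yields a continuous function on `[a, b]`, and this
function passes through all interpolation points. -/
theorem Phi_well_defined_continuous_interpolates
    (a b : ℝ) (hab : a < b) (N : ℕ) (hN : 2 ≤ N)
    (x y : ℕ → ℝ) (hxa : x 0 = a) (hxb : x N = b)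
    (hmono : ∀ j, j < N → x j < x (j + 1))
    (d : ℕ → ℝ) (g : ℝ → ℝ)
    (hg : ContinuousOn g (Set.Icc a b)) (hga : g a = y 0) (hgb : g b = y N) :
    let ai : ℕ → ℝ := fun i => (x i - x (i - 1)) / (b - a)
    let ci : ℕ → ℝ := fun i => (y i - y (i - 1) - d i * (y N - y 0)) / (b - a)
    let ei : ℕ → ℝ := fun i => (b * x (i - 1) - a * x i) / (b - a)
    let fi : ℕ → ℝ := fun i => (b * y (i - 1) - a * y i - d i * (b * y 0 - a * y N)) / (b - a)
    let uinv : ℕ → ℝ → ℝ := fun i t => (t - ei i) / ai i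
    let p : ℕ → ℝ → ℝ := fun i t => ci i * t + fi i
    (∀ i, 1 ≤ i → i < N →
      p i (uinv i (x i)) + d i * g (uinv i (x i)) =
        p (i + 1) (uinv (i + 1) (x i)) + d (i + 1) * g (uinv (i + 1) (x i))) ∧
    ∃ Φg : ℝ → ℝ,
      (∀ i, 1 ≤ i → i ≤ N → ∀ t ∈ Set.Icc (x (i - 1)) (x i),
        Φg t = p i (uinv i t) + d i * g (uinv i t)) ∧
      ContinuousOn Φg (Set.Icc a b) ∧
      ∀ j, j ≤ N → Φg (x j) = y j := by
  intro ai ci ei fi uinv p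
  have hba : b - a ≠ 0 := sub_ne_zero.2 hab.ne'
  -- strict monotonicity on each subinterval
  have hstep : ∀ i, 1 ≤ i → i ≤ N → x (i - 1) < x i := by
    intro i h1 h2
    have := hmono (i-1) (by omega)
    rwa [Nat.sub_add_cancel h1] at this
  have hdiff : ∀ i, 1 ≤ i → i ≤ N → x i - x (i - 1) ≠ 0 := fun i h1 h2 =>
    sub_ne_zero.2 (hstep i h1 h2).ne'
  -- global monotonicity
  have hmono' : ∀ i j, i ≤ j → j ≤ N → x i ≤ x j := by
    intro i j hij hjN
    induction j with
    | zero => simp_all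
    | succ k ih =>
      rcases Nat.lt_or_ge i (k+1) with h | h
      · exact le_trans (ih (by omega) (by omega)) (hmono k (by omega)).le
      · have : i = k + 1 := by omega
        simp [this]
  -- endpoint values of uinv
  have huinvR : ∀ i, 1 ≤ i → i ≤ N → uinv i (x i) = b := by
    intro i h1 h2
    have hd := hdiff i h1 h2
    show (x i - (b * x (i-1) - a * x i) / (b - a)) / ((x i - x (i-1)) / (b - a)) = b
    rw [div_eq_iff (div_ne_zero hd hba), eq_comm]
    field_simp
    ring
  have huinvL : ∀ i, 1 ≤ i → i ≤ N → uinv i (x (i - 1)) = a := by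
    intro i h1 h2
    have hd := hdiff i h1 h2
    show (x (i-1) - (b * x (i-1) - a * x i) / (b - a)) / ((x i - x (i-1)) / (b - a)) = a
    rw [div_eq_iff (div_ne_zero hd hba), eq_comm]
    field_simp
    ring
  -- the local pieces
  set h : ℕ → ℝ → ℝ := fun i t => p i (uinv i t) + d i * g (uinv i t) with hh
  -- endpoint values of h
  have hR : ∀ i, 1 ≤ i → i ≤ N → h i (x i) = y i := by
    intro i h1 h2
    show p i (uinv i (x i)) + d i * g (uinv i (x i)) = y i
    rw [huinvR i h1 h2, hgb]
    show (y i - y (i-1) - d i * (y N - y 0)) / (b - a) * b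
      + (b * y (i-1) - a * y i - d i * (b * y 0 - a * y N)) / (b - a) + d i * y N = y i
    field_simp
    ring
  have hL : ∀ i, 1 ≤ i → i ≤ N → h i (x (i - 1)) = y (i - 1) := by
    intro i h1 h2
    show p i (uinv i (x (i-1))) + d i * g (uinv i (x (i-1))) = y (i-1)
    rw [huinvL i h1 h2, hga]
    show (y i - y (i-1) - d i * (y N - y 0)) / (b - a) * a
      + (b * y (i-1) - a * y i - d i * (b * y 0 - a * y N)) / (b - a) + d i * y 0 = y (i-1)
    field_simp
    ring
  -- continuity of each local piece
  have hcont : ∀ i, 1 ≤ i → i ≤ N → ContinuousOn (h i) (Icc (x (i-1)) (x i)) := by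
    intro i h1 h2
    have hu : Continuous (uinv i) := by
      show Continuous fun t => (t - ei i) / ai i
      fun_prop
    have hmaps : MapsTo (uinv i) (Icc (x (i-1)) (x i)) (Icc a b) := by
      intro t ht
      have hai : 0 < ai i := div_pos (sub_pos.2 (hstep i h1 h2)) (sub_pos.2 hab)
      have humono : ∀ s u : ℝ, s ≤ u → uinv i s ≤ uinv i u := by
        intro s u hsu
        show (s - ei i) / ai i ≤ (u - ei i) / ai i
        gcongr
      constructor
      · have := humono _ _ ht.1
        rwa [huinvL i h1 h2] at this
      · have := humono _ _ ht.2
        rwa [huinvR i h1 h2] at this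
    show ContinuousOn (fun t => p i (uinv i t) + d i * g (uinv i t)) _
    apply ContinuousOn.add
    · exact (continuous_const.mul hu |>.add continuous_const).continuousOn
    · exact continuousOn_const.mul (hg.comp hu.continuousOn hmaps)
  -- well-definedness at interior nodes
  have hwd : ∀ i, 1 ≤ i → i < N →
      p i (uinv i (x i)) + d i * g (uinv i (x i)) =
        p (i + 1) (uinv (i + 1) (x i)) + d (i + 1) * g (uinv (i + 1) (x i)) := by
    intro i h1 h2
    have e1 : h i (x i) = y i := hR i h1 h2.le
    have e2 : h (i+1) (x ((i+1)-1)) = y ((i+1)-1) := hL (i+1) (by omega) (by omega)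
    simp only [Nat.add_sub_cancel] at e2
    exact e1.trans e2.symm
  refine ⟨hwd, PhiAux h x N, ?_⟩
  -- main induction
  have key : ∀ k, 1 ≤ k → k ≤ N →
      (∀ i, 1 ≤ i → i ≤ k → ∀ t ∈ Icc (x (i-1)) (x i), PhiAux h x k t = h i t) ∧
      ContinuousOn (PhiAux h x k) (Icc (x 0) (x k)) := by
    intro k
    induction k with
    | zero => omega
    | succ k ih =>
      intro _ hkN
      rcases Nat.eq_zero_or_pos k with rfl | hk1
      · constructor
        · intro i hi1 hi2 t ht
          have : i = 1 := by omega
          subst this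
          show (if t ≤ x 0 then h 1 t else h 1 t) = h 1 t
          simp
        · have : ∀ t ∈ Icc (x 0) (x 1), PhiAux h x 1 t = h 1 t := by
            intro t ht
            show (if t ≤ x 0 then h 1 t else h 1 t) = h 1 t
            simp
          exact (hcont 1 le_rfl (by omega)).congr this
      · obtain ⟨ihA, ihB⟩ := ih hk1 (by omega)
        have hxk : x k < x (k+1) := hstep (k+1) (by omega) hkN
        have eqold : ∀ t ∈ Icc (x 0) (x k), PhiAux h x (k+1) t = PhiAux h x k t := by
          intro t ht
          show (if t ≤ x k then PhiAux h x k t else h (k+1) t) = _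
          rw [if_pos ht.2]
        have eqnew : ∀ t ∈ Icc (x k) (x (k+1)), PhiAux h x (k+1) t = h (k+1) t := by
          intro t ht
          show (if t ≤ x k then PhiAux h x k t else h (k+1) t) = h (k+1) t
          by_cases hc : t ≤ x k
          · rw [if_pos hc]
            have htk : t = x k := le_antisymm hc ht.1
            subst htk
            have e1 : PhiAux h x k (x k) = h k (x k) :=
              ihA k hk1 le_rfl (x k) ⟨(hmono' (k-1) k (by omega) (by omega)), le_rfl⟩
            have e2 : h (k+1) (x ((k+1)-1)) = y ((k+1)-1) := hL (k+1) (by omega) hkN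
            simp only [Nat.add_sub_cancel] at e2
            rw [e1, hR k hk1 (by omega), e2]
          · rw [if_neg hc]
        constructor
        · intro i hi1 hi2 t ht
          rcases Nat.lt_or_ge i (k+1) with hik | hik
          · have hsub : Icc (x (i-1)) (x i) ⊆ Icc (x 0) (x k) := by
              apply Icc_subset_Icc
              · exact hmono' 0 (i-1) (by omega) (by omega)
              · exact hmono' i k (by omega) (by omega)
            rw [eqold t (hsub ht)]
            exact ihA i hi1 (by omega) t ht
          · have : i = k + 1 := by omega
            subst this
            exact eqnew t (by simpa using ht)
        · have hsplit : Icc (x 0) (x (k+1)) = Icc (x 0) (x k) ∪ Icc (x k) (x (k+1)) :=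
            (Icc_union_Icc_eq_Icc (hmono' 0 k (by omega) (by omega)) hxk.le).symm
          rw [hsplit]
          apply contOn_union_closed isClosed_Icc isClosed_Icc
          · exact ihB.congr eqold
          · exact (hcont (k+1) (by omega) hkN).congr eqnew
  obtain ⟨keyA, keyB⟩ := key N (by omega) le_rfl
  refine ⟨keyA, ?_, ?_⟩
  · rwa [hxa, hxb] at keyB
  · intro j hj
    rcases Nat.eq_zero_or_pos j with rfl | hj1
    · have := keyA 1 le_rfl (by omega) (x 0)
        ⟨le_rfl, (hstep 1 le_rfl (by omega)).le⟩
      rw [this]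
      exact hL 1 le_rfl (by omega)
    · have := keyA j hj1 hj (x j)
        ⟨(hstep j hj1 hj).le, le_rfl⟩
      rw [this]
      exact hR j hj1 hj
end

section
/- Suppose g, h : [a, b] → ℝ are continuous with g(a) = h(a) = y_0 and g(b) = h(b) = y_N, and let Φg, Φh be defined piecewise by (Φg)(x) = p_i(u_i⁻¹(x)) + d_i · g(u_i⁻¹(x)) for x ∈ [x_{i−1}, x_i], and likewise for Φh. Then sup_{x ∈ [a,b]} |(Φg)(x) − (Φh)(x)| ≤ (max_{1 ≤ i ≤ N} |d_i|) · sup_{x ∈ [a,b]} |g(x) − h(x)|. -/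
/-- The operator `Φ` is Lipschitz with constant `max_i |d_i|` for the sup-distance:
`sup_{[a,b]} |Φg - Φh| ≤ (max_i |d_i|) · sup_{[a,b]} |g - h|`. -/
theorem Phi_sup_contraction
    (a b : ℝ) (hab : a < b) (N : ℕ) (hN : 2 ≤ N)
    (x y : ℕ → ℝ) (hxa : x 0 = a) (hxb : x N = b)
    (hmono : ∀ j, j < N → x j < x (j + 1))
    (d : ℕ → ℝ) (g h : ℝ → ℝ)
    (hg : ContinuousOn g (Set.Icc a b)) (hga : g a = y 0) (hgb : g b = y N)
    (hh : ContinuousOn h (Set.Icc a b)) (hha : h a = y 0) (hhb : h b = y N) :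
    let ai : ℕ → ℝ := fun i => (x i - x (i - 1)) / (b - a)
    let ci : ℕ → ℝ := fun i => (y i - y (i - 1) - d i * (y N - y 0)) / (b - a)
    let ei : ℕ → ℝ := fun i => (b * x (i - 1) - a * x i) / (b - a)
    let fi : ℕ → ℝ := fun i => (b * y (i - 1) - a * y i - d i * (b * y 0 - a * y N)) / (b - a)
    let uinv : ℕ → ℝ → ℝ := fun i t => (t - ei i) / ai i
    let p : ℕ → ℝ → ℝ := fun i t => ci i * t + fi i
    ∀ Φg Φh : ℝ → ℝ,
      (∀ i, 1 ≤ i → i ≤ N → ∀ t ∈ Set.Icc (x (i - 1)) (x i),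
        Φg t = p i (uinv i t) + d i * g (uinv i t)) →
      (∀ i, 1 ≤ i → i ≤ N → ∀ t ∈ Set.Icc (x (i - 1)) (x i),
        Φh t = p i (uinv i t) + d i * h (uinv i t)) →
      sSup ((fun t => |Φg t - Φh t|) '' Set.Icc a b) ≤
        ((Finset.Icc 1 N).sup' (Finset.nonempty_Icc.mpr (by omega)) fun i => |d i|) *
          sSup ((fun t => |g t - h t|) '' Set.Icc a b) := by
  intro ai ci ei fi uinv p Φg Φh hΦg hΦh
  classical
  have hba : (0:ℝ) < b - a := by linarith
  have mmono : ∀ i j : ℕ, i ≤ j → j ≤ N → x i ≤ x j := by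
    intro i j hij hjN
    induction j with
    | zero => simp_all
    | succ k ih =>
      rcases Nat.eq_or_lt_of_le hij with rfl | hlt
      · exact le_rfl
      · exact le_trans (ih (Nat.lt_succ_iff.mp hlt) (by omega))
          (le_of_lt (hmono k (by omega)))
  set M := ((Finset.Icc 1 N).sup' (Finset.nonempty_Icc.mpr (by omega)) fun i => |d i|) with hM
  set S := sSup ((fun t => |g t - h t|) '' Set.Icc a b) with hS
  have h1mem : (1:ℕ) ∈ Finset.Icc 1 N := Finset.mem_Icc.mpr ⟨le_rfl, by omega⟩
  have hMnonneg : 0 ≤ M := by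
    rw [hM]; exact le_trans (abs_nonneg (d 1)) (Finset.le_sup' (fun i => |d i|) h1mem)
  have hbdd : BddAbove ((fun t => |g t - h t|) '' Set.Icc a b) :=
    (isCompact_Icc.image_of_continuousOn ((hg.sub hh).abs)).bddAbove
  have hSle : ∀ u ∈ Set.Icc a b, |g u - h u| ≤ S := fun u hu =>
    le_csSup hbdd ⟨u, hu, rfl⟩
  have hSnonneg : 0 ≤ S :=
    le_trans (abs_nonneg _) (hSle a ⟨le_refl a, le_of_lt hab⟩)
  apply Real.sSup_le
  · rintro v ⟨t, ht, rfl⟩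
    have hex : ∃ j, t ≤ x j := ⟨N, by rw [hxb]; exact ht.2⟩
    set k := Nat.find hex with hk
    have hkN : k ≤ N := Nat.find_le (by rw [hxb]; exact ht.2)
    have hkt : t ≤ x k := Nat.find_spec hex
    obtain ⟨i, hi1, hiN, hti1, hti2⟩ :
        ∃ i, 1 ≤ i ∧ i ≤ N ∧ x (i - 1) ≤ t ∧ t ≤ x i := by
      rcases Nat.eq_zero_or_pos k with hk0 | hk1
      · refine ⟨1, le_refl 1, by omega, ?_, ?_⟩
        · simpa [hxa] using ht.1
        · rw [hk0] at hkt
          exact le_trans hkt (mmono 0 1 (by omega) (by omega))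
      · refine ⟨k, hk1, hkN, ?_, hkt⟩
        have := Nat.find_min hex (show k - 1 < k by omega)
        linarith [lt_of_not_ge this]
    have hxii : x (i - 1) < x i := by
      have := hmono (i - 1) (by omega)
      rwa [Nat.sub_add_cancel hi1] at this
    have hwval : uinv i t = (t * (b - a) - b * x (i - 1) + a * x i) / (x i - x (i - 1)) := by
      show (t - (b * x (i - 1) - a * x i) / (b - a)) / ((x i - x (i - 1)) / (b - a)) = _
      have h1 : b - a ≠ 0 := hba.ne'
      have h2 : x i - x (i - 1) ≠ 0 := by linarith
      field_simp
      ring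
    have hwa : a ≤ uinv i t := by
      rw [hwval, le_div_iff₀ (by linarith)]
      nlinarith [mul_nonneg (sub_nonneg.mpr hti1) hba.le]
    have hwb : uinv i t ≤ b := by
      rw [hwval, div_le_iff₀ (by linarith)]
      nlinarith [mul_nonneg (sub_nonneg.mpr hti2) hba.le]
    have hdiff : Φg t - Φh t = d i * (g (uinv i t) - h (uinv i t)) := by
      rw [hΦg i hi1 hiN t ⟨hti1, hti2⟩, hΦh i hi1 hiN t ⟨hti1, hti2⟩]
      ring
    show |Φg t - Φh t| ≤ M * S
    rw [hdiff, abs_mul]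
    have hdM : |d i| ≤ M := by
      rw [hM]; exact Finset.le_sup' (fun i => |d i|) (Finset.mem_Icc.mpr ⟨hi1, hiN⟩)
    exact mul_le_mul hdM (hSle _ ⟨hwa, hwb⟩) (abs_nonneg _) hMnonneg
  · exact mul_nonneg hMnonneg hSnonneg
end

section
/- Suppose |d_i| < 1 for all i = 1, …, N. Then there exists a unique continuous function g* : [a, b] → ℝ with g*(a) = y_0 and g*(b) = y_N such that Φg* = g*, where (Φg)(x) = p_i(u_i⁻¹(x)) + d_i · g(u_i⁻¹(x)) for x ∈ [x_{i−1}, x_i]. Moreover, g*(x_j) = y_j for every j = 0, 1, …, N. -/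
/-!
The operator `Φ` is a contraction, with constant `max |dᵢ|`, for the sup distance on the
continuous functions on `[a, b]` with `g a = y₀` and `g b = y_N`, a complete space. The endpoint
values are what make `Φ g` well defined and continuous: both pieces meeting at a node `xᵢ` take
the value `yᵢ` there. Banach's fixed point theorem gives existence and uniqueness, and the same
endpoint computation at the right end of each cell gives `g* xⱼ = yⱼ`.
-/

open Set
open scoped NNReal

theorem Finset.exists_abs_le_nnreal_lt_one {ι : Type*} (s : Finset ι) {f : ι → ℝ}
    (hf : ∀ i ∈ s, |f i| < 1) : ∃ K : ℝ≥0, K < 1 ∧ ∀ i ∈ s, |f i| ≤ K := by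
  refine ⟨s.sup fun i => ‖f i‖₊, (Finset.sup_lt_iff (by simp)).2 fun i hi => ?_,
    fun i hi => ?_⟩
  · rw [← NNReal.coe_lt_coe, coe_nnnorm, Real.norm_eq_abs]
    exact hf i hi
  · rw [← Real.norm_eq_abs, ← coe_nnnorm, NNReal.coe_le_coe]
    exact Finset.le_sup (f := fun i => ‖f i‖₊) hi

section Partition

variable {α : Type*} [LinearOrder α] {x : ℕ → α} {N : ℕ}

theorem exists_mem_Icc_pred_of_mem_Icc (hN : 1 ≤ N) {t : α} (ht : t ∈ Icc (x 0) (x N)) :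
    ∃ i, 1 ≤ i ∧ i ≤ N ∧ t ∈ Icc (x (i - 1)) (x i) := by
  classical
  have hex : ∃ i, 1 ≤ i ∧ t ≤ x i := ⟨N, hN, ht.2⟩
  obtain ⟨hi, hti⟩ := Nat.find_spec hex
  refine ⟨Nat.find hex, hi, Nat.find_min' hex ⟨hN, ht.2⟩, ?_, hti⟩
  rcases hi.eq_or_lt with h | h
  · rw [← h]
    exact ht.1
  · exact (not_le.1 fun h' => Nat.find_min hex (Nat.sub_lt hi one_pos) ⟨by omega, h'⟩).le

theorem one_le_of_apply_zero_lt (h : x 0 < x N) : 1 ≤ N :=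
  Nat.one_le_iff_ne_zero.2 fun hN => h.ne (by rw [hN])

theorem Icc_pred_subset_Icc (hx : MonotoneOn x (Iic N)) {i : ℕ} (hiN : i ≤ N) :
    Icc (x (i - 1)) (x i) ⊆ Icc (x 0) (x N) :=
  Icc_subset_Icc (hx (by simp) (by simp; omega) (Nat.zero_le _)) (hx (by simpa) (by simp) hiN)

theorem eq_add_one_of_mem_Icc_pred (hx : StrictMonoOn x (Iic N)) {i j : ℕ} (hij : i < j)
    (hjN : j ≤ N) {t : α} (hti : t ∈ Icc (x (i - 1)) (x i))
    (htj : t ∈ Icc (x (j - 1)) (x j)) :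
    j = i + 1 ∧ t = x i := by
  have hj : j - 1 = i := by
    by_contra hne
    exact (hx (by simp; omega) (by simp; omega) (by omega : i < j - 1)).not_ge
      (htj.1.trans hti.2)
  refine ⟨by omega, le_antisymm hti.2 ?_⟩
  rw [← hj]
  exact htj.1

theorem StrictMonoOn.apply_pred_lt (hx : StrictMonoOn x (Iic N)) {i : ℕ} (hi : 1 ≤ i)
    (hiN : i ≤ N) : x (i - 1) < x i :=
  hx (by simp; omega) (by simpa) (by omega)

theorem continuousOn_Icc_of_continuousOn_Icc_pred [TopologicalSpace α] [OrderClosedTopology α]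
    {β : Type*} [TopologicalSpace β] {g : α → β} (hx : MonotoneOn x (Iic N))
    (hg : ∀ i, 1 ≤ i → i ≤ N → ContinuousOn g (Icc (x (i - 1)) (x i))) :
    ContinuousOn g (Icc (x 0) (x N)) := by
  induction N with
  | zero => simp
  | succ n ih =>
    have h0n : x 0 ≤ x n := hx (by simp) (by simp) (Nat.zero_le n)
    have hn : x n ≤ x (n + 1) := hx (by simp) (by simp) n.le_succ
    rw [← Icc_union_Icc_eq_Icc h0n hn]
    have hcells := ih (hx.mono (Iic_subset_Iic.2 n.le_succ)) fun i hi hin => hg i hi (by omega)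
    exact hcells.union_of_isClosed (hg (n + 1) (by omega) le_rfl) isClosed_Icc isClosed_Icc

/-- At a node the cell is chosen arbitrarily; outside `[x 0, x N]` the value is junk. -/
noncomputable def cellIndex (x : ℕ → α) (N : ℕ) (t : α) : ℕ :=
  Classical.epsilon fun i => 1 ≤ i ∧ i ≤ N ∧ t ∈ Icc (x (i - 1)) (x i)

theorem cellIndex_spec (hN : 1 ≤ N) {t : α} (ht : t ∈ Icc (x 0) (x N)) :
    1 ≤ cellIndex x N t ∧ cellIndex x N t ≤ N ∧
      t ∈ Icc (x (cellIndex x N t - 1)) (x (cellIndex x N t)) :=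
  Classical.epsilon_spec (exists_mem_Icc_pred_of_mem_Icc hN ht)

variable {β : Type*}

noncomputable def partitionGlue (x : ℕ → α) (N : ℕ) (F : ℕ → α → β) (t : α) : β :=
  F (cellIndex x N t) t

variable {F : ℕ → α → β}

theorem partitionGlue_eq (hx : StrictMonoOn x (Iic N))
    (hF : ∀ i, 1 ≤ i → i < N → F i (x i) = F (i + 1) (x i)) {i : ℕ} (hi : 1 ≤ i)
    (hiN : i ≤ N) {t : α} (ht : t ∈ Icc (x (i - 1)) (x i)) :
    partitionGlue x N F t = F i t := by
  obtain ⟨hj, hjN, htj⟩ :=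
    cellIndex_spec (hi.trans hiN) (Icc_pred_subset_Icc hx.monotoneOn hiN ht)
  unfold partitionGlue
  generalize cellIndex x N t = j at hj hjN htj
  rcases lt_trichotomy i j with h | rfl | h
  · obtain ⟨rfl, rfl⟩ := eq_add_one_of_mem_Icc_pred hx h hjN ht htj
    exact (hF i hi (by omega)).symm
  · rfl
  · obtain ⟨rfl, rfl⟩ := eq_add_one_of_mem_Icc_pred hx h hiN htj ht
    exact hF j hj (by omega)

theorem continuousOn_partitionGlue [TopologicalSpace α] [OrderClosedTopology α]
    [TopologicalSpace β] (hx : StrictMonoOn x (Iic N))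
    (hF : ∀ i, 1 ≤ i → i < N → F i (x i) = F (i + 1) (x i))
    (hcont : ∀ i, 1 ≤ i → i ≤ N → ContinuousOn (F i) (Icc (x (i - 1)) (x i))) :
    ContinuousOn (partitionGlue x N F) (Icc (x 0) (x N)) :=
  continuousOn_Icc_of_continuousOn_Icc_pred hx.monotoneOn fun i hi hiN =>
    (hcont i hi hiN).congr fun _ ht => partitionGlue_eq hx hF hi hiN ht

end Partition

section Bridges

def bridges (a b ya yb : ℝ) : Set (ℝ → ℝ) :=
  {g | ContinuousOn g (Icc a b) ∧ g a = ya ∧ g b = yb}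

variable {a b ya yb : ℝ}

theorem bridges_nonempty (hab : a < b) : (bridges a b ya yb).Nonempty := by
  refine ⟨fun t => ya + (t - a) / (b - a) * (yb - ya), by fun_prop, by simp, ?_⟩
  simp [div_self (sub_pos.2 hab).ne']

theorem IccExtend_mem_bridges_iff (hab : a ≤ b) (f : C(Icc a b, ℝ)) :
    IccExtend hab f ∈ bridges a b ya yb ↔
      f ⟨a, left_mem_Icc.2 hab⟩ = ya ∧ f ⟨b, right_mem_Icc.2 hab⟩ = yb := by
  simp only [bridges, mem_ofPred_eq, (f.continuous.Icc_extend' (h := hab)).continuousOn,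
    true_and, IccExtend_left, IccExtend_right]

theorem isClosed_setOf_IccExtend_mem_bridges (hab : a ≤ b) :
    IsClosed {f : C(Icc a b, ℝ) | IccExtend hab f ∈ bridges a b ya yb} := by
  simp only [IccExtend_mem_bridges_iff]
  exact (isClosed_eq (continuous_eval_const _) continuous_const).inter
    (isClosed_eq (continuous_eval_const _) continuous_const)

/-- Banach's fixed point theorem, applied in the closed subspace of `C(Icc a b, ℝ)` cut out by
the endpoint values. -/
theorem exists_eqOn_fixed_unique_of_contraction (hab : a < b) {Φ : (ℝ → ℝ) → ℝ → ℝ}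
    {K : ℝ≥0} (hK : K < 1) (hΦ : MapsTo Φ (bridges a b ya yb) (bridges a b ya yb))
    (hlip : ∀ g h M, (∀ s ∈ Icc a b, |g s - h s| ≤ M) →
      ∀ t ∈ Icc a b, |Φ g t - Φ h t| ≤ K * M) :
    ∃ g ∈ bridges a b ya yb, EqOn (Φ g) g (Icc a b) ∧
      ∀ h ∈ bridges a b ya yb, EqOn (Φ h) h (Icc a b) → EqOn h g (Icc a b) := by
  have hcongr : ∀ g h, EqOn g h (Icc a b) → EqOn (Φ g) (Φ h) (Icc a b) := fun g h hgh t ht =>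
    sub_eq_zero.1 <| abs_nonpos_iff.1 <| by
      simpa using hlip g h 0 (fun s hs => by simp [hgh hs]) t ht
  let E := {f : C(Icc a b, ℝ) // IccExtend hab.le f ∈ bridges a b ya yb}
  have : CompleteSpace E := (isClosed_setOf_IccExtend_mem_bridges hab.le).completeSpace_coe
  let ofBridge (g : ℝ → ℝ) (hg : g ∈ bridges a b ya yb) : E :=
    ⟨⟨(Icc a b).domRestrict g, hg.1.domRestrict⟩, (IccExtend_mem_bridges_iff _ _).2 hg.2⟩
  have IccExtend_ofBridge (g : ℝ → ℝ) (hg : g ∈ bridges a b ya yb) :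
      EqOn (IccExtend hab.le (ofBridge g hg).1) g (Icc a b) := fun t ht => IccExtend_of_mem _ _ ht
  have : Nonempty E := ⟨ofBridge _ (bridges_nonempty hab).some_mem⟩
  let T (f : E) : E := ofBridge _ (hΦ f.2)
  have hT : ContractingWith K T := by
    refine ⟨hK, LipschitzWith.of_dist_le_mul fun f g => ?_⟩
    rw [Subtype.dist_eq, Subtype.dist_eq]
    refine (ContinuousMap.dist_le (by positivity)).2 fun s => ?_
    rw [Real.dist_eq]
    refine hlip _ _ _ (fun s _ => ?_) s s.2
    rw [← Real.dist_eq]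
    exact ContinuousMap.dist_apply_le_dist _
  refine ⟨IccExtend hab.le (hT.fixedPoint).1, (hT.fixedPoint).2, fun t ht => ?_,
    fun h hh hfix t ht => ?_⟩
  · rw [IccExtend_of_mem _ _ ht]
    exact congrArg (fun f : E => f.1 ⟨t, ht⟩) hT.fixedPoint_isFixedPt
  · have hT_ofBridge : T (ofBridge h hh) = ofBridge h hh := by
      ext s
      exact (hcongr _ _ (IccExtend_ofBridge h hh) s.2).trans (hfix s.2)
    rw [IccExtend_of_mem _ _ ht]
    exact congrArg (fun f : E => f.1 ⟨t, ht⟩) (hT.fixedPoint_unique hT_ofBridge)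

end Bridges

noncomputable section

namespace FractalInterpolation

variable (a b : ℝ) (x y d : ℕ → ℝ) (N : ℕ)

/-- `uᵢ⁻¹`, written with the paper's coefficients `aᵢ = (xᵢ - xᵢ₋₁)/(b - a)` and
`eᵢ = (b xᵢ₋₁ - a xᵢ)/(b - a)`. -/
def chartInv (i : ℕ) (t : ℝ) : ℝ :=
  (t - (b * x (i - 1) - a * x i) / (b - a)) / ((x i - x (i - 1)) / (b - a))

/-- `pᵢ t = cᵢ t + fᵢ`. -/
def vertical (i : ℕ) (t : ℝ) : ℝ :=
  (y i - y (i - 1) - d i * (y N - y 0)) / (b - a) * t +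
    (b * y (i - 1) - a * y i - d i * (b * y 0 - a * y N)) / (b - a)

def selfAffinePiece (g : ℝ → ℝ) (i : ℕ) (t : ℝ) : ℝ :=
  vertical a b y d N i (chartInv a b x i t) + d i * g (chartInv a b x i t)

/-- The operator `Φ` of the statement. -/
def readBajraktarevic (g : ℝ → ℝ) : ℝ → ℝ :=
  partitionGlue x N (selfAffinePiece a b x y d N g)

def IsSelfAffine (g : ℝ → ℝ) : Prop :=
  ∀ i, 1 ≤ i → i ≤ N → ∀ t ∈ Icc (x (i - 1)) (x i),
    g t = selfAffinePiece a b x y d N g i t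

variable {a b x y d N}

theorem chartInv_left (hab : a < b) {i : ℕ} (hi : x (i - 1) < x i) :
    chartInv a b x i (x (i - 1)) = a := by
  have := (sub_pos.2 hab).ne'
  have := (sub_pos.2 hi).ne'
  unfold chartInv
  field_simp
  ring

theorem chartInv_right (hab : a < b) {i : ℕ} (hi : x (i - 1) < x i) :
    chartInv a b x i (x i) = b := by
  have := (sub_pos.2 hab).ne'
  have := (sub_pos.2 hi).ne'
  unfold chartInv
  field_simp
  ring

theorem continuous_chartInv (i : ℕ) : Continuous (chartInv a b x i) := by
  unfold chartInv
  fun_prop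

theorem mapsTo_chartInv (hab : a < b) {i : ℕ} (hi : x (i - 1) < x i) :
    MapsTo (chartInv a b x i) (Icc (x (i - 1)) (x i)) (Icc a b) := by
  have hmono : Monotone (chartInv a b x i) := fun s t hst =>
    div_le_div_of_nonneg_right (by linarith) (div_pos (sub_pos.2 hi) (sub_pos.2 hab)).le
  intro t ht
  exact ⟨(chartInv_left hab hi).symm.le.trans (hmono ht.1),
    (hmono ht.2).trans (chartInv_right hab hi).le⟩

theorem vertical_left (hab : a < b) (i : ℕ) :
    vertical a b y d N i a + d i * y 0 = y (i - 1) := by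
  have := (sub_pos.2 hab).ne'
  unfold vertical
  field_simp
  ring

theorem vertical_right (hab : a < b) (i : ℕ) : vertical a b y d N i b + d i * y N = y i := by
  have := (sub_pos.2 hab).ne'
  unfold vertical
  field_simp
  ring

variable {g : ℝ → ℝ}

theorem selfAffinePiece_left (hab : a < b) (hga : g a = y 0) {i : ℕ} (hi : x (i - 1) < x i) :
    selfAffinePiece a b x y d N g i (x (i - 1)) = y (i - 1) := by
  rw [selfAffinePiece, chartInv_left hab hi, hga, vertical_left hab]

theorem selfAffinePiece_right (hab : a < b) (hgb : g b = y N) {i : ℕ} (hi : x (i - 1) < x i) :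
    selfAffinePiece a b x y d N g i (x i) = y i := by
  rw [selfAffinePiece, chartInv_right hab hi, hgb, vertical_right hab]

theorem selfAffinePiece_agree_at_node (hab : a < b) (hx : StrictMonoOn x (Iic N))
    (hga : g a = y 0) (hgb : g b = y N) {i : ℕ} (hi : 1 ≤ i) (hiN : i < N) :
    selfAffinePiece a b x y d N g i (x i) = selfAffinePiece a b x y d N g (i + 1) (x i) := by
  have hleft := selfAffinePiece_left (d := d) (N := N) hab hga (hx.apply_pred_lt (i := i + 1)
    (by omega) (by omega))
  rw [Nat.add_sub_cancel] at hleft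
  rw [selfAffinePiece_right hab hgb (hx.apply_pred_lt hi hiN.le), hleft]

theorem readBajraktarevic_eq (hab : a < b) (hx : StrictMonoOn x (Iic N)) (hga : g a = y 0)
    (hgb : g b = y N) {i : ℕ} (hi : 1 ≤ i) (hiN : i ≤ N) {t : ℝ}
    (ht : t ∈ Icc (x (i - 1)) (x i)) :
    readBajraktarevic a b x y d N g t = selfAffinePiece a b x y d N g i t :=
  partitionGlue_eq hx (fun _ hj hjN => selfAffinePiece_agree_at_node hab hx hga hgb hj hjN)
    hi hiN ht

theorem continuousOn_selfAffinePiece (hab : a < b) (hg : ContinuousOn g (Icc a b)) {i : ℕ}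
    (hi : x (i - 1) < x i) :
    ContinuousOn (selfAffinePiece a b x y d N g i) (Icc (x (i - 1)) (x i)) := by
  have hu := continuous_chartInv (a := a) (b := b) (x := x) i
  have hvert : Continuous (vertical a b y d N i) := by
    unfold vertical
    fun_prop
  exact (hvert.comp hu).continuousOn.add
    (continuousOn_const.mul (hg.comp hu.continuousOn (mapsTo_chartInv hab hi)))

theorem mapsTo_readBajraktarevic (hab : a < b) (hx : StrictMonoOn x (Iic N)) (hxa : x 0 = a)
    (hxb : x N = b) :
    MapsTo (readBajraktarevic a b x y d N) (bridges a b (y 0) (y N))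
      (bridges a b (y 0) (y N)) := by
  rintro g ⟨hg, hga, hgb⟩
  have hN : 1 ≤ N := one_le_of_apply_zero_lt (hxa ▸ hxb ▸ hab)
  refine ⟨?_, ?_, ?_⟩
  · have : ContinuousOn (readBajraktarevic a b x y d N g) (Icc (x 0) (x N)) :=
      continuousOn_partitionGlue hx
        (fun _ hi hiN => selfAffinePiece_agree_at_node hab hx hga hgb hi hiN)
        fun i hi hiN => continuousOn_selfAffinePiece hab hg (hx.apply_pred_lt hi hiN)
    rwa [hxa, hxb] at this
  · have h1 := hx.apply_pred_lt le_rfl hN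
    have := readBajraktarevic_eq (d := d) hab hx hga hgb le_rfl hN (left_mem_Icc.2 h1.le)
    rw [selfAffinePiece_left hab hga h1] at this
    simpa [hxa] using this
  · have hN' := hx.apply_pred_lt hN le_rfl
    have := readBajraktarevic_eq (d := d) hab hx hga hgb hN le_rfl (right_mem_Icc.2 hN'.le)
    rwa [selfAffinePiece_right hab hgb hN', hxb] at this

theorem abs_readBajraktarevic_sub_le (hab : a < b) (hx : StrictMonoOn x (Iic N))
    (hxa : x 0 = a) (hxb : x N = b) {K : ℝ≥0} (hdK : ∀ i, 1 ≤ i → i ≤ N → |d i| ≤ K) (g h : ℝ → ℝ) (M : ℝ)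
    (hgh : ∀ s ∈ Icc a b, |g s - h s| ≤ M) {t : ℝ} (ht : t ∈ Icc a b) :
    |readBajraktarevic a b x y d N g t - readBajraktarevic a b x y d N h t| ≤ K * M := by
  have hN : 1 ≤ N := one_le_of_apply_zero_lt (hxa ▸ hxb ▸ hab)
  obtain ⟨hi, hiN, hti⟩ := cellIndex_spec hN (hxa ▸ hxb ▸ ht)
  set i := cellIndex x N t
  set u := chartInv a b x i t
  have hu : u ∈ Icc a b := mapsTo_chartInv hab (hx.apply_pred_lt hi hiN) hti
  calc |readBajraktarevic a b x y d N g t - readBajraktarevic a b x y d N h t|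
      = |d i| * |g u - h u| := by
        rw [← abs_mul]
        congr 1
        simp only [readBajraktarevic, partitionGlue, selfAffinePiece]
        ring
    _ ≤ K * M := mul_le_mul (hdK i hi hiN) (hgh u hu) (abs_nonneg _) K.2

theorem isSelfAffine_iff_eqOn (hab : a < b) (hx : StrictMonoOn x (Iic N)) (hxa : x 0 = a)
    (hxb : x N = b) (hg : g ∈ bridges a b (y 0) (y N)) :
    IsSelfAffine a b x y d N g ↔ EqOn (readBajraktarevic a b x y d N g) g (Icc a b) := by
  constructor
  · intro hself t ht
    have hN : 1 ≤ N := one_le_of_apply_zero_lt (hxa ▸ hxb ▸ hab)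
    obtain ⟨hi, hiN, hti⟩ := cellIndex_spec hN (hxa ▸ hxb ▸ ht)
    exact (hself _ hi hiN t hti).symm
  · intro hfix i hi hiN t ht
    rw [← readBajraktarevic_eq hab hx hg.2.1 hg.2.2 hi hiN ht]
    exact (hfix (hxa ▸ hxb ▸ Icc_pred_subset_Icc hx.monotoneOn hiN ht)).symm

theorem IsSelfAffine.apply_node (hab : a < b) (hx : StrictMonoOn x (Iic N)) (hxa : x 0 = a)
    (hg : g ∈ bridges a b (y 0) (y N)) (hself : IsSelfAffine a b x y d N g) {j : ℕ}
    (hj : j ≤ N) :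
    g (x j) = y j := by
  rcases Nat.eq_zero_or_pos j with rfl | hj0
  · rw [hxa, hg.2.1]
  · have hlt := hx.apply_pred_lt hj0 hj
    rw [hself j hj0 hj (x j) ⟨hlt.le, le_rfl⟩, selfAffinePiece_right hab hg.2.2 hlt]

end FractalInterpolation

end

open FractalInterpolation

theorem fractal_interpolation_function_exists_unique_general
    (a b : ℝ) (hab : a < b) (N : ℕ)
    (x y : ℕ → ℝ) (hxa : x 0 = a) (hxb : x N = b)
    (hmono : ∀ j, j < N → x j < x (j + 1))
    (d : ℕ → ℝ) (hd : ∀ i, 1 ≤ i → i ≤ N → |d i| < 1) :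
    let ai : ℕ → ℝ := fun i => (x i - x (i - 1)) / (b - a)
    let ci : ℕ → ℝ := fun i => (y i - y (i - 1) - d i * (y N - y 0)) / (b - a)
    let ei : ℕ → ℝ := fun i => (b * x (i - 1) - a * x i) / (b - a)
    let fi : ℕ → ℝ := fun i => (b * y (i - 1) - a * y i - d i * (b * y 0 - a * y N)) / (b - a)
    let uinv : ℕ → ℝ → ℝ := fun i t => (t - ei i) / ai i
    let p : ℕ → ℝ → ℝ := fun i t => ci i * t + fi i
    ∃ gstar : ℝ → ℝ,
      (ContinuousOn gstar (Set.Icc a b) ∧ gstar a = y 0 ∧ gstar b = y N ∧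
        ∀ i, 1 ≤ i → i ≤ N → ∀ t ∈ Set.Icc (x (i - 1)) (x i),
          gstar t = p i (uinv i t) + d i * gstar (uinv i t)) ∧
      (∀ h : ℝ → ℝ,
        (ContinuousOn h (Set.Icc a b) ∧ h a = y 0 ∧ h b = y N ∧
          ∀ i, 1 ≤ i → i ≤ N → ∀ t ∈ Set.Icc (x (i - 1)) (x i),
            h t = p i (uinv i t) + d i * h (uinv i t)) →
        ∀ t ∈ Set.Icc a b, h t = gstar t) ∧
      ∀ j, j ≤ N → gstar (x j) = y j := by
  intro ai ci ei fi uinv p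
  have hx : StrictMonoOn x (Iic N) := strictMonoOn_Iic_of_lt_succ hmono
  obtain ⟨K, hK, hdK⟩ := (Finset.Icc 1 N).exists_abs_le_nnreal_lt_one fun i hi =>
    hd i (Finset.mem_Icc.1 hi).1 (Finset.mem_Icc.1 hi).2
  obtain ⟨g, hg, hgfix, hunique⟩ := exists_eqOn_fixed_unique_of_contraction hab hK
    (mapsTo_readBajraktarevic (d := d) hab hx hxa hxb)
    fun g h M hgh t ht => abs_readBajraktarevic_sub_le hab hx hxa hxb
      (fun i hi hiN => hdK i (Finset.mem_Icc.2 ⟨hi, hiN⟩)) g h M hgh ht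
  have hself := (isSelfAffine_iff_eqOn hab hx hxa hxb hg).2 hgfix
  refine ⟨g, ⟨hg.1, hg.2.1, hg.2.2, hself⟩, fun h ⟨hc, ha, hb, hhself⟩ t ht => ?_,
    fun j hj => hself.apply_node hab hx hxa hg hj⟩
  have hh : h ∈ bridges a b (y 0) (y N) := ⟨hc, ha, hb⟩
  exact hunique h hh ((isSelfAffine_iff_eqOn hab hx hxa hxb hh).1 hhself) ht

/-- If `|d_i| < 1` for all `i`, there is a unique continuous function `g*` on `[a, b]` with
`g* a = y₀`, `g* b = y_N` satisfying `Φ g* = g*` (i.e. the piecewise self-affine functional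
equation), and `g*` passes through all interpolation points. -/
theorem fractal_interpolation_function_exists_unique
    (a b : ℝ) (hab : a < b) (N : ℕ) (hN : 2 ≤ N)
    (x y : ℕ → ℝ) (hxa : x 0 = a) (hxb : x N = b)
    (hmono : ∀ j, j < N → x j < x (j + 1))
    (d : ℕ → ℝ) (hd : ∀ i, 1 ≤ i → i ≤ N → |d i| < 1) :
    let ai : ℕ → ℝ := fun i => (x i - x (i - 1)) / (b - a)
    let ci : ℕ → ℝ := fun i => (y i - y (i - 1) - d i * (y N - y 0)) / (b - a)
    let ei : ℕ → ℝ := fun i => (b * x (i - 1) - a * x i) / (b - a)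
    let fi : ℕ → ℝ := fun i => (b * y (i - 1) - a * y i - d i * (b * y 0 - a * y N)) / (b - a)
    let uinv : ℕ → ℝ → ℝ := fun i t => (t - ei i) / ai i
    let p : ℕ → ℝ → ℝ := fun i t => ci i * t + fi i
    ∃ gstar : ℝ → ℝ,
      (ContinuousOn gstar (Set.Icc a b) ∧ gstar a = y 0 ∧ gstar b = y N ∧
        ∀ i, 1 ≤ i → i ≤ N → ∀ t ∈ Set.Icc (x (i - 1)) (x i),
          gstar t = p i (uinv i t) + d i * gstar (uinv i t)) ∧
      (∀ h : ℝ → ℝ,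
        (ContinuousOn h (Set.Icc a b) ∧ h a = y 0 ∧ h b = y N ∧
          ∀ i, 1 ≤ i → i ≤ N → ∀ t ∈ Set.Icc (x (i - 1)) (x i),
            h t = p i (uinv i t) + d i * h (uinv i t)) →
        ∀ t ∈ Set.Icc a b, h t = gstar t) ∧
      ∀ j, j ≤ N → gstar (x j) = y j :=
  fractal_interpolation_function_exists_unique_general a b hab N x y hxa hxb hmono d hd
end

section
/- Suppose |d_i| < 1 for all i = 1, …, N, and let g* be the unique continuous fixed point of Φ with g*(a) = y_0, g*(b) = y_N. Then for every continuous g : [a, b] → ℝ with g(a) = y_0 and g(b) = y_N, the iterates Φⁿ(g) converge uniformly to g*: lim_{n→∞} sup_{x ∈ [a,b]} |(Φⁿ g)(x) − g*(x)| = 0. -/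
/-- If `|d_i| < 1` for all `i` and `g*` is the continuous fixed point of `Φ` with the right
boundary values, then for every continuous `g` on `[a, b]` with `g a = y₀`, `g b = y_N`,
the iterates `Φ^[n] g` converge uniformly on `[a, b]` to `g*`. -/
theorem Phi_iterates_converge_uniformly
    (a b : ℝ) (hab : a < b) (N : ℕ) (hN : 2 ≤ N)
    (x y : ℕ → ℝ) (hxa : x 0 = a) (hxb : x N = b)
    (hmono : ∀ j, j < N → x j < x (j + 1))
    (d : ℕ → ℝ) (hd : ∀ i, 1 ≤ i → i ≤ N → |d i| < 1) :
    let ai : ℕ → ℝ := fun i => (x i - x (i - 1)) / (b - a)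
    let ci : ℕ → ℝ := fun i => (y i - y (i - 1) - d i * (y N - y 0)) / (b - a)
    let ei : ℕ → ℝ := fun i => (b * x (i - 1) - a * x i) / (b - a)
    let fi : ℕ → ℝ := fun i => (b * y (i - 1) - a * y i - d i * (b * y 0 - a * y N)) / (b - a)
    let uinv : ℕ → ℝ → ℝ := fun i t => (t - ei i) / ai i
    let p : ℕ → ℝ → ℝ := fun i t => ci i * t + fi i
    ∀ Φ : (ℝ → ℝ) → ℝ → ℝ,
      (∀ g : ℝ → ℝ, ContinuousOn g (Set.Icc a b) → g a = y 0 → g b = y N →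
        ContinuousOn (Φ g) (Set.Icc a b) ∧ Φ g a = y 0 ∧ Φ g b = y N ∧
        ∀ i, 1 ≤ i → i ≤ N → ∀ t ∈ Set.Icc (x (i - 1)) (x i),
          Φ g t = p i (uinv i t) + d i * g (uinv i t)) →
      ∀ gstar : ℝ → ℝ, ContinuousOn gstar (Set.Icc a b) →
        gstar a = y 0 → gstar b = y N →
        (∀ t ∈ Set.Icc a b, Φ gstar t = gstar t) →
      ∀ g : ℝ → ℝ, ContinuousOn g (Set.Icc a b) → g a = y 0 → g b = y N →
        Filter.Tendsto
          (fun n : ℕ => sSup ((fun t => |Φ^[n] g t - gstar t|) '' Set.Icc a b))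
          Filter.atTop (nhds 0) := by
  intro ai ci ei fi uinv p Φ hΦ gstar hgsc hgsa hgsb hfix g hgc hga hgb
  have hba : (0:ℝ) < b - a := sub_pos.mpr hab
  have hNe : (Finset.Icc 1 N).Nonempty := ⟨1, Finset.mem_Icc.mpr ⟨le_refl _, by omega⟩⟩
  set D : ℝ := (Finset.Icc 1 N).sup' hNe (fun i => |d i|) with hD
  have hD0 : 0 ≤ D :=
    le_trans (abs_nonneg (d 1)) (Finset.le_sup' (fun i => |d i|)
      (show (1:ℕ) ∈ Finset.Icc 1 N from Finset.mem_Icc.mpr ⟨le_refl 1, by omega⟩))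
  have hD1 : D < 1 := by
    rw [hD, Finset.sup'_lt_iff]
    intro i hi
    rw [Finset.mem_Icc] at hi
    exact hd i hi.1 hi.2
  have hDle : ∀ i, 1 ≤ i → i ≤ N → |d i| ≤ D := fun i h1 h2 =>
    Finset.le_sup' (fun i => |d i|)
      (show i ∈ Finset.Icc 1 N from Finset.mem_Icc.mpr ⟨h1, h2⟩)
  -- covering
  have hcover : ∀ t ∈ Set.Icc a b, ∃ i, 1 ≤ i ∧ i ≤ N ∧ t ∈ Set.Icc (x (i-1)) (x i) := by
    intro t ht
    have key : ∀ m, 1 ≤ m → m ≤ N → t ≤ x m →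
        ∃ i, 1 ≤ i ∧ i ≤ m ∧ x (i-1) ≤ t ∧ t ≤ x i := by
      intro m
      induction m with
      | zero => omega
      | succ m ih =>
        intro _ hmN htm
        by_cases hm : m = 0
        · subst hm
          exact ⟨1, le_refl _, le_refl _, by simpa [hxa] using ht.1, htm⟩
        · by_cases h : t ≤ x m
          · obtain ⟨i, h1, h2, h3, h4⟩ := ih (by omega) (by omega) h
            exact ⟨i, h1, by omega, h3, h4⟩
          · refine ⟨m+1, by omega, le_refl _, ?_, htm⟩
            simpa using (le_of_lt (lt_of_not_ge h))
    have := key N (by omega) (le_refl _) (by rw [hxb]; exact ht.2)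
    obtain ⟨i, h1, h2, h3, h4⟩ := this
    exact ⟨i, h1, h2, h3, h4⟩
  have hai : ∀ i, 1 ≤ i → i ≤ N → 0 < ai i := by
    intro i h1 h2
    have h3 := hmono (i-1) (by omega)
    rw [Nat.sub_add_cancel h1] at h3
    exact div_pos (sub_pos.mpr h3) hba
  have hxe1 : ∀ i, a * ai i + ei i = x (i-1) := by
    intro i; simp only [ai, ei]; field_simp; ring
  have hxe2 : ∀ i, b * ai i + ei i = x i := by
    intro i; simp only [ai, ei]; field_simp; ring
  have huinv : ∀ i, 1 ≤ i → i ≤ N → ∀ t ∈ Set.Icc (x (i-1)) (x i),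
      uinv i t ∈ Set.Icc a b := by
    intro i h1 h2 t ht
    have hp := hai i h1 h2
    constructor
    · rw [le_div_iff₀ hp]
      have := hxe1 i
      have := ht.1
      linarith
    · rw [div_le_iff₀ hp]
      have := hxe2 i
      have := ht.2
      linarith
  have hcontract : ∀ h : ℝ → ℝ, ContinuousOn h (Set.Icc a b) → h a = y 0 → h b = y N →
      ∀ C : ℝ, (∀ s ∈ Set.Icc a b, |h s - gstar s| ≤ C) →
      ∀ t ∈ Set.Icc a b, |Φ h t - gstar t| ≤ D * C := by
    intro h hc h0 h1 C hC t ht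
    obtain ⟨i, hi1, hi2, hti⟩ := hcover t ht
    have hs := huinv i hi1 hi2 t hti
    have e1 := (hΦ h hc h0 h1).2.2.2 i hi1 hi2 t hti
    have e2 := (hΦ gstar hgsc hgsa hgsb).2.2.2 i hi1 hi2 t hti
    have e3 : gstar t = Φ gstar t := (hfix t ht).symm
    have key : Φ h t - gstar t = d i * (h (uinv i t) - gstar (uinv i t)) := by
      rw [e3, e1, e2]; ring
    rw [key, abs_mul]
    exact mul_le_mul (hDle i hi1 hi2) (hC _ hs) (abs_nonneg _) hD0
  have hiter : ∀ n, ContinuousOn (Φ^[n] g) (Set.Icc a b) ∧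
      Φ^[n] g a = y 0 ∧ Φ^[n] g b = y N := by
    intro n
    induction n with
    | zero => exact ⟨hgc, hga, hgb⟩
    | succ n ih =>
      rw [Function.iterate_succ_apply']
      obtain ⟨h1, h2, h3, _⟩ := hΦ _ ih.1 ih.2.1 ih.2.2
      exact ⟨h1, h2, h3⟩
  have hM_bdd : BddAbove ((fun t => |g t - gstar t|) '' Set.Icc a b) :=
    IsCompact.bddAbove_image isCompact_Icc ((hgc.sub hgsc).abs)
  set M := sSup ((fun t => |g t - gstar t|) '' Set.Icc a b) with hMdef
  have hM0 : 0 ≤ M := Real.sSup_nonneg (by rintro _ ⟨t, ht, rfl⟩; exact abs_nonneg _)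
  have hMle : ∀ t ∈ Set.Icc a b, |g t - gstar t| ≤ M := fun t ht =>
    le_csSup hM_bdd ⟨t, ht, rfl⟩
  have hbound : ∀ n, ∀ t ∈ Set.Icc a b, |Φ^[n] g t - gstar t| ≤ D^n * M := by
    intro n
    induction n with
    | zero => simpa using hMle
    | succ n ih =>
      intro t ht
      have key := hcontract (Φ^[n] g) (hiter n).1 (hiter n).2.1 (hiter n).2.2 (D^n * M) ih t ht
      rw [Function.iterate_succ_apply']
      calc |Φ (Φ^[n] g) t - gstar t| ≤ D * (D^n * M) := key
        _ = D^(n+1) * M := by ring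
  have htend : Filter.Tendsto (fun n : ℕ => D^n * M) Filter.atTop (nhds 0) := by
    have := (tendsto_pow_atTop_nhds_zero_of_lt_one hD0 hD1).mul_const M
    simpa using this
  apply squeeze_zero (g := fun n : ℕ => D^n * M)
  · intro n
    exact Real.sSup_nonneg (by rintro _ ⟨t, ht, rfl⟩; exact abs_nonneg _)
  · intro n
    apply Real.sSup_le
    · rintro _ ⟨t, ht, rfl⟩
      exact hbound n t ht
    · positivity
  · exact htend
end

section
/- Let g : [a, b] → ℝ be square-integrable, and for each i = 1, …, N define α_i(x) = ((y_i − y_{i−1})x + (x_i y_{i−1} − x_{i−1} y_i)) / (x_i − x_{i−1}), β_i(x) = ((y_N − y_0)x + (x_i y_0 − x_{i−1} y_N)) / (x_i − x_{i−1}), γ_i(x) = ((b − a)x + (x_i a − x_{i−1} b)) / (x_i − x_{i−1}). Assume that for every i, ∫_{x_{i−1}}^{x_i} (β_i(x) − g(γ_i(x)))² dx > 0. Then the functional F(d_1, …, d_N) = Σ_{i=1}^{N} ∫_{x_{i−1}}^{x_i} (g(x) − α_i(x) + d_i(β_i(x) − g(γ_i(x))))² dx attains its global minimum over ℝ^N at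 the unique point given by d_i = ∫_{x_{i−1}}^{x_i} (α_i(x) − g(x))(β_i(x) − g(γ_i(x))) dx / ∫_{x_{i−1}}^{x_i} (β_i(x) − g(γ_i(x)))² dx for i = 1, …, N. -/
/-!
For each `i` the integral `∫_{x_{i-1}}^{x_i} (u + c v)²` with `u = g - αᵢ`, `v = βᵢ - g ∘ γᵢ` is a
quadratic polynomial in `c` with leading coefficient `∫ v² > 0`; completing the square writes it as
its value at `c₀ = -∫ u v / ∫ v²` plus `(∫ v²) (c - c₀)²`. Since `F` is a sum of such decoupled
quadratics, `dopt` is its unique minimizer. The analytic input is only that `u, v ∈ L²` on each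
subinterval: `g ∘ γᵢ` is a.e.-strongly measurable because the affine map `γᵢ` is
quasi-measure-preserving onto `[a, b]`, and `v²` is integrable because its integral is nonzero.
-/

open MeasureTheory Set

section QuadraticInL2

variable {Ω : Type*} [MeasurableSpace Ω] {μ : Measure Ω} {u v : Ω → ℝ}

theorem memLp_two_of_integral_sq_ne_zero (hv : AEStronglyMeasurable v μ)
    (h : ∫ ω, v ω ^ 2 ∂μ ≠ 0) : MemLp v 2 μ :=
  (memLp_two_iff_integrable_sq hv).2 (Integrable.of_integral_ne_zero h)

theorem integral_add_mul_sq (hu : MemLp u 2 μ) (hv : MemLp v 2 μ) (c : ℝ) :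
    ∫ ω, (u ω + c * v ω) ^ 2 ∂μ =
      ∫ ω, u ω ^ 2 ∂μ + 2 * c * ∫ ω, u ω * v ω ∂μ + c ^ 2 * ∫ ω, v ω ^ 2 ∂μ := by
  have huv : Integrable (fun ω => u ω * v ω) μ := hu.integrable_mul hv
  have hexpand : (fun ω => (u ω + c * v ω) ^ 2) =
      fun ω => u ω ^ 2 + 2 * c * (u ω * v ω) + c ^ 2 * v ω ^ 2 := by
    funext ω; ring
  rw [hexpand, integral_add (f := fun ω => u ω ^ 2 + 2 * c * (u ω * v ω))
      (hu.integrable_sq.add (huv.const_mul _)) (hv.integrable_sq.const_mul _),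
    integral_add (f := fun ω => u ω ^ 2) hu.integrable_sq (huv.const_mul _),
    integral_const_mul, integral_const_mul]

theorem integral_add_mul_sq_eq_min_add (hu : MemLp u 2 μ) (hv : MemLp v 2 μ) {c₀ : ℝ}
    (hc₀ : c₀ * ∫ ω, v ω ^ 2 ∂μ = -∫ ω, u ω * v ω ∂μ) (c : ℝ) :
    ∫ ω, (u ω + c * v ω) ^ 2 ∂μ =
      ∫ ω, (u ω + c₀ * v ω) ^ 2 ∂μ + (∫ ω, v ω ^ 2 ∂μ) * (c - c₀) ^ 2 := by
  rw [integral_add_mul_sq hu hv, integral_add_mul_sq hu hv]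
  linear_combination (2 * (c - c₀)) * hc₀

end QuadraticInL2

theorem Finset.sum_isMin_unique_of_eq_add_mul_sq {ι : Type*} {s : Finset ι} {f : ι → ℝ → ℝ}
    {k c : ι → ℝ} (hk : ∀ i ∈ s, 0 < k i)
    (hf : ∀ i ∈ s, ∀ t, f i t = f i (c i) + k i * (t - c i) ^ 2) :
    (∀ d : ι → ℝ, ∑ i ∈ s, f i (c i) ≤ ∑ i ∈ s, f i (d i)) ∧
      (∀ d : ι → ℝ, ∑ i ∈ s, f i (d i) = ∑ i ∈ s, f i (c i) → ∀ i ∈ s, d i = c i) := by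
  have hsplit : ∀ d : ι → ℝ, ∑ i ∈ s, f i (d i) =
      ∑ i ∈ s, f i (c i) + ∑ i ∈ s, k i * (d i - c i) ^ 2 := fun d => by
    rw [← Finset.sum_add_distrib]
    exact Finset.sum_congr rfl fun i hi => hf i hi (d i)
  have hnonneg : ∀ d : ι → ℝ, ∀ i ∈ s, 0 ≤ k i * (d i - c i) ^ 2 := fun d i hi =>
    mul_nonneg (hk i hi).le (sq_nonneg _)
  refine ⟨fun d => ?_, fun d hd i hi => ?_⟩
  · rw [hsplit d]
    exact le_add_of_nonneg_right (Finset.sum_nonneg (hnonneg d))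
  · have hzero : ∑ i ∈ s, k i * (d i - c i) ^ 2 = 0 := by linarith [hsplit d]
    have hterm := (Finset.sum_eq_zero_iff_of_nonneg (hnonneg d)).1 hzero i hi
    rw [mul_eq_zero, sq_eq_zero_iff, sub_eq_zero] at hterm
    exact hterm.resolve_left (hk i hi).ne'

theorem quasiMeasurePreserving_mul_add (r s : ℝ) (hr : r ≠ 0) :
    Measure.QuasiMeasurePreserving (fun t : ℝ => r * t + s) volume volume :=
  (measurePreserving_add_right volume s).quasiMeasurePreserving.comp
    (Measure.quasiMeasurePreserving_smul volume hr)

section Rescale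

variable {p q a b : ℝ}

theorem quasiMeasurePreserving_rescale (hpq : p ≠ q) (hab : a ≠ b) :
    Measure.QuasiMeasurePreserving
      (fun t => ((b - a) * t + (q * a - p * b)) / (q - p)) volume volume := by
  have hqp : q - p ≠ 0 := sub_ne_zero.2 hpq.symm
  convert quasiMeasurePreserving_mul_add ((b - a) / (q - p)) ((q * a - p * b) / (q - p))
    (div_ne_zero (sub_ne_zero.2 hab.symm) hqp) using 2 with t
  field_simp

theorem mapsTo_rescale (hpq : p < q) (hab : a ≤ b) :
    MapsTo (fun t => ((b - a) * t + (q * a - p * b)) / (q - p)) (Icc p q) (Icc a b) := by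
  intro t ⟨hpt, htq⟩
  have hqp : 0 < q - p := sub_pos.2 hpq
  constructor
  · rw [le_div_iff₀ hqp]; nlinarith
  · rw [div_le_iff₀ hqp]; nlinarith

end Rescale

theorem integral_collage_sq_eq {a b p q : ℝ} (hpq : p ≤ q) (hsub : Icc p q ⊆ Icc a b)
    {g α β γ : ℝ → ℝ} (hg : MemLp g 2 (volume.restrict (Icc a b))) (hα : Continuous α)
    (hβ : Continuous β) (hγ : Measure.QuasiMeasurePreserving γ volume volume)
    (hγmaps : MapsTo γ (Icc p q) (Icc a b)) (hpos : 0 < ∫ t in p..q, (β t - g (γ t)) ^ 2)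
    {c₀ : ℝ} (hc₀ : c₀ = (∫ t in p..q, (α t - g t) * (β t - g (γ t))) /
      ∫ t in p..q, (β t - g (γ t)) ^ 2) (c : ℝ) :
    ∫ t in p..q, (g t - α t + c * (β t - g (γ t))) ^ 2 =
      (∫ t in p..q, (g t - α t + c₀ * (β t - g (γ t))) ^ 2) +
        (∫ t in p..q, (β t - g (γ t)) ^ 2) * (c - c₀) ^ 2 := by
  simp only [intervalIntegral.integral_of_le hpq] at hpos hc₀ ⊢
  have hg' : MemLp g 2 (volume.restrict (Ioc p q)) :=
    hg.mono_measure (Measure.restrict_mono (Ioc_subset_Icc_self.trans hsub) le_rfl)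
  have hα' : MemLp α 2 (volume.restrict (Ioc p q)) :=
    (memLp_two_iff_integrable_sq hα.aestronglyMeasurable).2
      ((hα.pow 2).integrableOn_Icc.mono_set Ioc_subset_Icc_self)
  have hgγ : AEStronglyMeasurable (fun t => g (γ t)) (volume.restrict (Ioc p q)) :=
    hg.1.comp_quasiMeasurePreserving (hγ.restrict (hγmaps.mono_left Ioc_subset_Icc_self))
  have hv : MemLp (fun t => β t - g (γ t)) 2 (volume.restrict (Ioc p q)) :=
    memLp_two_of_integral_sq_ne_zero (hβ.aestronglyMeasurable.sub hgγ) hpos.ne'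
  have hnum : ∫ t in Ioc p q, (α t - g t) * (β t - g (γ t)) =
      -∫ t in Ioc p q, (g t - α t) * (β t - g (γ t)) := by
    rw [← integral_neg]
    congr 1 with t
    ring
  refine integral_add_mul_sq_eq_min_add (u := fun t => g t - α t) (hg'.sub hα') hv ?_ c
  rw [hc₀, div_mul_cancel₀ _ hpos.ne', hnum]

theorem collage_functional_minimizer_general
    (a b : ℝ) (hab : a < b) (N : ℕ)
    (x y : ℕ → ℝ) (hxa : x 0 = a) (hxb : x N = b)
    (hmono : ∀ j, j < N → x j < x (j + 1))
    (g : ℝ → ℝ) (hg : MemLp g 2 (volume.restrict (Set.Icc a b))) :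
    let α : ℕ → ℝ → ℝ := fun i t =>
      ((y i - y (i - 1)) * t + (x i * y (i - 1) - x (i - 1) * y i)) / (x i - x (i - 1))
    let β : ℕ → ℝ → ℝ := fun i t =>
      ((y N - y 0) * t + (x i * y 0 - x (i - 1) * y N)) / (x i - x (i - 1))
    let γ : ℕ → ℝ → ℝ := fun i t =>
      ((b - a) * t + (x i * a - x (i - 1) * b)) / (x i - x (i - 1))
    let F : (ℕ → ℝ) → ℝ := fun d =>
      ∑ i ∈ Finset.Icc 1 N,
        ∫ t in (x (i - 1))..(x i), (g t - α i t + d i * (β i t - g (γ i t))) ^ 2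
    let dopt : ℕ → ℝ := fun i =>
      (∫ t in (x (i - 1))..(x i), (α i t - g t) * (β i t - g (γ i t))) /
        (∫ t in (x (i - 1))..(x i), (β i t - g (γ i t)) ^ 2)
    (∀ i, 1 ≤ i → i ≤ N → 0 < ∫ t in (x (i - 1))..(x i), (β i t - g (γ i t)) ^ 2) →
    (∀ d : ℕ → ℝ, F dopt ≤ F d) ∧
    (∀ d : ℕ → ℝ, F d = F dopt → ∀ i, 1 ≤ i → i ≤ N → d i = dopt i) := by
  intro α β γ F dopt hpos
  have hx : StrictMonoOn x (Iic N) := strictMonoOn_Iic_of_lt_succ hmono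
  have hpiece : ∀ i ∈ Finset.Icc 1 N, ∀ c : ℝ,
      ∫ t in (x (i - 1))..(x i), (g t - α i t + c * (β i t - g (γ i t))) ^ 2 =
        (∫ t in (x (i - 1))..(x i), (g t - α i t + dopt i * (β i t - g (γ i t))) ^ 2) +
          (∫ t in (x (i - 1))..(x i), (β i t - g (γ i t)) ^ 2) * (c - dopt i) ^ 2 := by
    intro i hi c
    obtain ⟨hi1, hiN⟩ := Finset.mem_Icc.1 hi
    have hlt : x (i - 1) < x i := hx (by simp; omega) (by simpa using hiN) (by omega)
    have hsub : Icc (x (i - 1)) (x i) ⊆ Icc a b := by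
      refine Icc_subset_Icc ?_ ?_
      · exact hxa ▸ hx.monotoneOn (by simp) (by simp; omega) (Nat.zero_le _)
      · exact hxb ▸ hx.monotoneOn (by simpa using hiN) (by simp) hiN
    exact integral_collage_sq_eq (α := α i) (β := β i) (γ := γ i) hlt.le hsub hg
      (by fun_prop) (by fun_prop) (quasiMeasurePreserving_rescale hlt.ne hab.ne)
      (mapsTo_rescale hlt hab.le) (hpos i hi1 hiN) rfl c
  obtain ⟨hmin, huniq⟩ := Finset.sum_isMin_unique_of_eq_add_mul_sq
    (fun i hi => hpos i (Finset.mem_Icc.1 hi).1 (Finset.mem_Icc.1 hi).2) hpiece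
  exact ⟨hmin, fun d hd i hi1 hiN => huniq d hd i (Finset.mem_Icc.2 ⟨hi1, hiN⟩)⟩

/-- The collage functional `F(d₁,…,d_N) = Σᵢ ∫_{x_{i−1}}^{x_i} (g − αᵢ + dᵢ(βᵢ − g∘γᵢ))² dx`
attains its global minimum over `ℝᴺ` at the unique point given by
`dᵢ = ∫ (αᵢ − g)(βᵢ − g∘γᵢ) / ∫ (βᵢ − g∘γᵢ)²`. -/
theorem collage_functional_minimizer
    (a b : ℝ) (hab : a < b) (N : ℕ) (hN : 2 ≤ N)
    (x y : ℕ → ℝ) (hxa : x 0 = a) (hxb : x N = b)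
    (hmono : ∀ j, j < N → x j < x (j + 1))
    (g : ℝ → ℝ) (hg : MemLp g 2 (volume.restrict (Set.Icc a b))) :
    let α : ℕ → ℝ → ℝ := fun i t =>
      ((y i - y (i - 1)) * t + (x i * y (i - 1) - x (i - 1) * y i)) / (x i - x (i - 1))
    let β : ℕ → ℝ → ℝ := fun i t =>
      ((y N - y 0) * t + (x i * y 0 - x (i - 1) * y N)) / (x i - x (i - 1))
    let γ : ℕ → ℝ → ℝ := fun i t =>
      ((b - a) * t + (x i * a - x (i - 1) * b)) / (x i - x (i - 1))
    let F : (ℕ → ℝ) → ℝ := fun d =>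
      ∑ i ∈ Finset.Icc 1 N,
        ∫ t in (x (i - 1))..(x i), (g t - α i t + d i * (β i t - g (γ i t))) ^ 2
    let dopt : ℕ → ℝ := fun i =>
      (∫ t in (x (i - 1))..(x i), (α i t - g t) * (β i t - g (γ i t))) /
        (∫ t in (x (i - 1))..(x i), (β i t - g (γ i t)) ^ 2)
    (∀ i, 1 ≤ i → i ≤ N → 0 < ∫ t in (x (i - 1))..(x i), (β i t - g (γ i t)) ^ 2) →
    (∀ d : ℕ → ℝ, F dopt ≤ F d) ∧
    (∀ d : ℕ → ℝ, F d = F dopt → ∀ i, 1 ≤ i → i ≤ N → d i = dopt i) :=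
  collage_functional_minimizer_general a b hab N x y hxa hxb hmono g hg
end
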